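/- Let $\omega \in \{0,1\}^n$ be a binary string with $\omega_0 = 0$ and $\omega_{n-1}=1$, let $N_n(\omega)$ be the number of indices $i<n$ with $\omega_i = 1$, and suppose $1 \le N_n(\omega)$. Define the run-length encoding $s(\omega) = (s_1,\dots,s_{N_n})$ where $s_j$ is the number of consecutive $0$s preceding the $j$-th occurrence of $1$, and define the information function $I_{s'}(\omega) = \sum_{j=1}^{N_n} (2\lfloor \log_2(1+s_j)\rfloor + 1)$. Then $N_n(\omega) + 2\log_2(n - N_n(\omega) + 1) - C \le I_{s'}(\omega) \le N_n(\omega) + 2 N_n(\omega) \log_2(n / N_n(\omega)) + C$ for an absolute constant $C$ independent of $n$ and $\omega$. -/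

import Mathlib

/-- Run-length encoding of a binary string: for each occurrence of `true`,
record the number of consecutive `false`s immediately preceding it
(trailing `false`s are discarded). -/
def runLengths : List Bool → List ℕ
  | [] => []
  | (b :: t) =>
    if b then 0 :: runLengths t
    else
      match runLengths t with
      | [] => []
      | (k :: r) => (k + 1) :: r

/-- The information content of the prefix-code run-length compression:
each run length `m` is encoded by `2⌊log₂(1+m)⌋ + 1` bits. -/
def infoContent (ω : List Bool) : ℝ :=
  ((runLengths ω).map (fun m => 2 * (Nat.log 2 (1 + m) : ℝ) + 1)).sum

/-!
The run lengths `s₁, …, s_N` sum to `n - N`, and the code length of `m` is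
`2 log₂(1 + m) + 1` up to an error in `[-2, 0]`. For the lower bound, `m ↦ ⌊log₂(1 + m)⌋` is
subadditive, so the total is at least `2⌊log₂(1 + n - N)⌋ + N`. For the upper bound,
concavity of the logarithm gives `∑ log₂(1 + sⱼ) ≤ N log₂(n / N)`, since `∑ (1 + sⱼ) = n`.
-/

open Real

lemma length_runLengths (ω : List Bool) : (runLengths ω).length = ω.count true := by
  induction ω with
  | nil => rfl
  | cons b t ih =>
    cases b with
    | true => simp [runLengths, ih]
    | false =>
      simp only [runLengths, Bool.false_eq_true, if_false]
      cases hr : runLengths t <;> simp_all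

lemma sum_runLengths_append_true (ω : List Bool) :
    (runLengths (ω ++ [true])).sum = ω.count false := by
  induction ω with
  | nil => rfl
  | cons b t ih =>
    cases b with
    | true => simp [runLengths, ih]
    | false =>
      have hne : runLengths (t ++ [true]) ≠ [] := by
        simp [← List.length_pos_iff, length_runLengths]
      obtain ⟨k, r, hkr⟩ := List.exists_cons_of_ne_nil hne
      rw [hkr] at ih
      simp [runLengths, hkr, ← ih, add_right_comm]

lemma count_true_add_sum_runLengths {ω : List Bool} (h : ω.getLast? = some true) :
    ω.count true + (runLengths ω).sum = ω.length := by
  obtain ⟨ω, rfl⟩ := List.getLast?_eq_some_iff.mp h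
  have := List.count_true_add_count_false ω
  simp [sum_runLengths_append_true]
  omega

lemma infoContent_eq (ω : List Bool) :
    infoContent ω = ω.count true + 2 * ((runLengths ω).map fun m => Nat.log 2 (1 + m)).sum := by
  rw [infoContent, List.sum_map_add, List.sum_map_mul_left, Nat.cast_list_sum, List.map_map]
  simp [length_runLengths, add_comm, Function.comp_def]

lemma Nat.log_two_one_add_add_le (a b : ℕ) :
    Nat.log 2 (1 + (a + b)) ≤ Nat.log 2 (1 + a) + Nat.log 2 (1 + b) := by
  refine Nat.lt_succ_iff.mp (Nat.log_lt_of_lt_pow (by omega) ?_)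
  have ha : 2 + a ≤ 2 ^ Nat.log 2 (1 + a) * 2 := by
    have := Nat.lt_pow_succ_log_self one_lt_two (1 + a); rw [pow_succ] at this; omega
  have hb : 2 + b ≤ 2 ^ Nat.log 2 (1 + b) * 2 := by
    have := Nat.lt_pow_succ_log_self one_lt_two (1 + b); rw [pow_succ] at this; omega
  rw [pow_succ, pow_add]
  -- `2 (2 + a + b) ≤ (2 + a) (2 + b)`
  nlinarith [Nat.mul_le_mul ha hb]

lemma Real.logb_natCast_lt_natLog_add_one (b m : ℕ) : logb b m < Nat.log b m + 1 := by
  simpa [← Real.natFloor_logb_natCast] using Nat.lt_floor_add_one (logb b m)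

lemma List.sum_map_log_le (l : List ℝ) (hl : ∀ x ∈ l, 0 < x) :
    (l.map log).sum ≤ l.length * log (l.sum / l.length) := by
  obtain rfl | hne := eq_or_ne l []
  · simp
  have hN : (0 : ℝ) < l.length := by exact_mod_cast List.length_pos_iff.mpr hne
  set c := l.sum / l.length
  have hS : 0 < l.sum := l.sum_pos hl hne
  have hc : 0 < c := div_pos hS hN
  have tangent : ∀ x ∈ l, log x ≤ (log c - 1) + x * c⁻¹ := fun x hx => by
    have := log_le_sub_one_of_pos (div_pos (hl x hx) hc)
    rw [log_div (hl x hx).ne' hc.ne'] at this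
    linarith [div_eq_mul_inv x c]
  calc (l.map log).sum ≤ (l.map fun x => (log c - 1) + x * c⁻¹).sum := List.sum_le_sum tangent
    _ = l.length * (log c - 1) + l.sum * c⁻¹ := by
      simp [List.sum_map_add, List.sum_map_mul_right]
    _ = l.length * log c := by
      rw [show l.sum * c⁻¹ = l.length by simp only [c]; field_simp [hS.ne']]
      ring

theorem infoContent_ge {ω : List Bool} (h : ω.getLast? = some true) :
    ω.count true + 2 * logb 2 (ω.length - ω.count true + 1) - 2 ≤ infoContent ω := by
  set s := runLengths ω
  have hlog : (Nat.log 2 (1 + s.sum) : ℝ) ≤ ((s.map fun m => Nat.log 2 (1 + m)).sum : ℕ) := by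
    exact_mod_cast List.le_sum_of_subadditive (fun m => Nat.log 2 (1 + m)) (by simp)
      Nat.log_two_one_add_add_le s
  have hfloor : logb 2 ((1 + s.sum : ℕ) : ℝ) < Nat.log 2 (1 + s.sum) + 1 := by
    exact_mod_cast Real.logb_natCast_lt_natLog_add_one 2 (1 + s.sum)
  have hn : (ω.length : ℝ) - ω.count true + 1 = (1 + s.sum : ℕ) := by
    rw [← count_true_add_sum_runLengths h]; push_cast; ring
  rw [infoContent_eq, hn]
  linarith

theorem infoContent_le {ω : List Bool} (h : ω.getLast? = some true) :
    infoContent ω ≤ ω.count true + 2 * ω.count true * logb 2 (ω.length / ω.count true) := by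
  set s := runLengths ω
  set L : List ℝ := s.map fun m : ℕ => 1 + (m : ℝ)
  have hLlen : L.length = ω.count true := by simp [L, s, length_runLengths]
  have hLsum : L.sum = ω.length := by
    rw [← count_true_add_sum_runLengths h]
    simp [L, List.sum_map_add, length_runLengths, Nat.cast_list_sum, s]
  have hconcave := L.sum_map_log_le (by simp [L]; intro m _; positivity)
  rw [hLlen, hLsum] at hconcave
  have hnatLog : (((s.map fun m => Nat.log 2 (1 + m)).sum : ℕ) : ℝ) ≤ (L.map log).sum / log 2 := by
    rw [div_eq_mul_inv, ← List.sum_map_mul_right, Nat.cast_list_sum, List.map_map, List.map_map]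
    refine List.sum_le_sum fun m _ => ?_
    simpa [logb, div_eq_mul_inv] using Real.natLog_le_logb (1 + m) 2
  have hdiv : (L.map log).sum / log 2 ≤ ω.count true * logb 2 (ω.length / ω.count true) := by
    rw [logb, ← mul_div_assoc]
    gcongr
  rw [infoContent_eq]
  linarith

/-- Lemma 3.3: for a binary string `ω` of length `n` starting with `0` and ending
with `1`, with `N` ones, the compressed information content satisfies
`N + 2 log₂(n - N + 1) - C ≤ I ≤ N + 2 N log₂(n/N) + C` for an absolute constant `C`. -/
theorem infoContent_bounds :
    ∃ C : ℝ, ∀ (ω : List Bool),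
      ω.head? = some false → ω.getLast? = some true → 1 ≤ ω.count true →
      let n := ω.length
      let N := ω.count true
      (N : ℝ) + 2 * Real.logb 2 ((n : ℝ) - (N : ℝ) + 1) - C ≤ infoContent ω ∧
      infoContent ω ≤ (N : ℝ) + 2 * (N : ℝ) * Real.logb 2 ((n : ℝ) / (N : ℝ)) + C := by
  refine ⟨2, fun ω _ hlast _ => ⟨infoContent_ge hlast, ?_⟩⟩
  linarith [infoContent_le hlast]
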